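/- arXiv:2511.19712 — 4 statements merged into one kernel-verified Lean document; each statement's English description precedes it below -/
import Mathlib

section
/- Let q' = p^ℓ be a prime power and let H be a subgroup of (ℤ/q'ℤ)^× of index at most m, where m is a positive integer. Then there exist integers g₁, g₂ whose residues modulo q' lie in H and which satisfy 2 < g₂ − g₁ < 12m + 6. -/
/-!
Since `φ(p^ℓ) ≥ p^ℓ / 2`, a subgroup `H` of index `k` in `(ℤ/p^ℓ)ˣ` has at least `p^ℓ / (2k)`
residues in `[0, p^ℓ)`. Cut `[0, p^ℓ)` into blocks of length `L = 12k + 6`: if no two residues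
of `H` differed by an amount in `[3, L)`, each block would contain at most one residue from each
class mod 3, so at most `3 (p^ℓ / L + 1)` residues in total, which is too few once `p^ℓ ≥ L`.
When `p^ℓ < L`, the residue `1` and its translate by a small multiple of `p^ℓ` do the job.
-/

open Finset Nat

theorem Nat.Prime.pow_le_two_mul_totient {p : ℕ} (hp : p.Prime) (ℓ : ℕ) :
    p ^ ℓ ≤ 2 * φ (p ^ ℓ) := by
  cases ℓ with
  | zero => simp
  | succ n =>
    rw [Nat.totient_prime_pow_succ hp, pow_succ]
    have := hp.two_le
    calc p ^ n * p ≤ p ^ n * (2 * (p - 1)) := Nat.mul_le_mul_left _ (by omega)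
      _ = 2 * (p ^ n * (p - 1)) := by ring

theorem Finset.exists_add_three_le_lt_add_of_card_lt {S : Finset ℕ} {N L : ℕ} (hL : 0 < L)
    (hS : ∀ x ∈ S, x < N) (hcard : 3 * (N / L + 1) < #S) :
    ∃ x ∈ S, ∃ y ∈ S, x + 3 ≤ y ∧ y < x + L := by
  by_contra! hgap
  have hinj : Set.InjOn (fun x => (x / L, x % 3)) S := by
    intro x hx y hy hxy
    obtain ⟨hblock, hmod⟩ := Prod.mk.inj hxy
    by_contra hne
    wlog hlt : x < y generalizing x y
    · exact this hy hx hxy.symm hblock.symm hmod.symm (Ne.symm hne) (by omega)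
    have hxL := Nat.div_add_mod x L
    have hyL := Nat.div_add_mod y L
    rw [hblock] at hxL
    have := Nat.mod_lt y hL
    have := hgap x hx y hy (by omega)
    omega
  have hmaps : Set.MapsTo (fun x => (x / L, x % 3)) S (range (N / L + 1) ×ˢ range 3 : Finset _) := by
    intro x hx
    simp only [coe_product, coe_range, Set.mem_prod, Set.mem_Iio]
    exact ⟨Nat.lt_succ_of_le (Nat.div_le_div_right (hS x hx).le), Nat.mod_lt _ (by norm_num)⟩
  have := card_le_card_of_injOn _ hmaps hinj
  rw [card_product, card_range, card_range, mul_comm] at this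
  omega

section

variable {q : ℕ} [NeZero q] (H : Subgroup (ZMod q)ˣ)

theorem ZMod.exists_units_mem_gap_of_lt {L : ℕ} (hqL : q < L) (hL : 5 ≤ L) :
    ∃ g₁ g₂ : ℤ,
      (∃ u₁ ∈ H, ((u₁ : (ZMod q)ˣ) : ZMod q) = (g₁ : ZMod q)) ∧
      (∃ u₂ ∈ H, ((u₂ : (ZMod q)ˣ) : ZMod q) = (g₂ : ZMod q)) ∧
      2 < g₂ - g₁ ∧ g₂ - g₁ < L := by
  obtain ⟨t, htq, ht3, htL⟩ : ∃ t : ℕ, q ∣ t ∧ 3 ≤ t ∧ t < L := by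
    have := NeZero.pos q
    by_cases h3 : 3 ≤ q
    · exact ⟨q, dvd_rfl, h3, hqL⟩
    · exact ⟨4, by interval_cases q <;> norm_num, by norm_num, by omega⟩
  have ht0 : (t : ZMod q) = 0 := (ZMod.natCast_eq_zero_iff t q).mpr htq
  refine ⟨1, 1 + t, ⟨1, H.one_mem, by simp⟩, ⟨1, H.one_mem, ?_⟩, by omega, by omega⟩
  push_cast
  simp [ht0]

theorem ZMod.exists_units_mem_gap_of_card_lt {L : ℕ} (hL : 0 < L)
    (hcard : 3 * (q / L + 1) < Nat.card H) :
    ∃ g₁ g₂ : ℤ,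
      (∃ u₁ ∈ H, ((u₁ : (ZMod q)ˣ) : ZMod q) = (g₁ : ZMod q)) ∧
      (∃ u₂ ∈ H, ((u₂ : (ZMod q)ˣ) : ZMod q) = (g₂ : ZMod q)) ∧
      2 < g₂ - g₁ ∧ g₂ - g₁ < L := by
  classical
  let residue : H → ℕ := fun u => ((u : (ZMod q)ˣ) : ZMod q).val
  have hinj : Function.Injective residue := fun u v h =>
    Subtype.ext (Units.ext (ZMod.val_injective q h))
  obtain ⟨_, hx, _, hy, hlo, hhi⟩ := exists_add_three_le_lt_add_of_card_lt (S := univ.image residue)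
    (N := q) hL (by simp [residue, ZMod.val_lt])
    (by rwa [card_image_of_injective _ hinj, Finset.card_univ, ← Nat.card_eq_fintype_card])
  obtain ⟨u₁, -, rfl⟩ := mem_image.mp hx
  obtain ⟨u₂, -, rfl⟩ := mem_image.mp hy
  refine ⟨residue u₁, residue u₂, ⟨u₁, u₁.2, ?_⟩, ⟨u₂, u₂.2, ?_⟩, by omega, by omega⟩ <;>
    simp [residue]

theorem ZMod.exists_units_mem_gap_of_le_two_mul_totient (hq : q ≤ 2 * φ q) :
    ∃ g₁ g₂ : ℤ,
      (∃ u₁ ∈ H, ((u₁ : (ZMod q)ˣ) : ZMod q) = (g₁ : ZMod q)) ∧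
      (∃ u₂ ∈ H, ((u₂ : (ZMod q)ˣ) : ZMod q) = (g₂ : ZMod q)) ∧
      2 < g₂ - g₁ ∧ g₂ - g₁ < 12 * H.index + 6 := by
  by_cases hqL : q < 12 * H.index + 6
  · exact_mod_cast exists_units_mem_gap_of_lt H hqL (by omega)
  · have hdensity : φ q = Nat.card H * H.index := by
      rw [H.card_mul_index, Nat.card_eq_fintype_card, ZMod.card_units_eq_totient]
    have hcard : 3 * (q / (12 * H.index + 6) + 1) < Nat.card H := by
      refine not_le.mp fun hsmall => hqL ?_
      have hblocks := Nat.div_mul_le_self q (12 * H.index + 6)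
      have := Nat.mul_le_mul_left H.index hsmall
      nlinarith
    exact_mod_cast exists_units_mem_gap_of_card_lt H (by omega) hcard

end

theorem stmt_10_general (p : ℕ) (hp : p.Prime) (ℓ : ℕ)
    (m : ℕ)
    (H : Subgroup (ZMod (p ^ ℓ))ˣ) (hH : H.index ≤ m) :
    ∃ g₁ g₂ : ℤ,
      (∃ u₁ ∈ H, ((u₁ : (ZMod (p ^ ℓ))ˣ) : ZMod (p ^ ℓ)) = (g₁ : ZMod (p ^ ℓ))) ∧
      (∃ u₂ ∈ H, ((u₂ : (ZMod (p ^ ℓ))ˣ) : ZMod (p ^ ℓ)) = (g₂ : ZMod (p ^ ℓ))) ∧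
      2 < g₂ - g₁ ∧ g₂ - g₁ < 12 * m + 6 := by
  have : NeZero (p ^ ℓ) := ⟨pow_ne_zero _ hp.ne_zero⟩
  obtain ⟨g₁, g₂, h₁, h₂, hlo, hhi⟩ :=
    ZMod.exists_units_mem_gap_of_le_two_mul_totient H (hp.pow_le_two_mul_totient ℓ)
  exact ⟨g₁, g₂, h₁, h₂, hlo, by omega⟩

theorem stmt_10 (p : ℕ) (hp : p.Prime) (ℓ : ℕ) (hℓ : 1 ≤ ℓ)
    (m : ℕ) (hm : 0 < m)
    (H : Subgroup (ZMod (p ^ ℓ))ˣ) (hH : H.index ≤ m) :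
    ∃ g₁ g₂ : ℤ,
      (∃ u₁ ∈ H, ((u₁ : (ZMod (p ^ ℓ))ˣ) : ZMod (p ^ ℓ)) = (g₁ : ZMod (p ^ ℓ))) ∧
      (∃ u₂ ∈ H, ((u₂ : (ZMod (p ^ ℓ))ˣ) : ZMod (p ^ ℓ)) = (g₂ : ZMod (p ^ ℓ))) ∧
      2 < g₂ - g₁ ∧ g₂ - g₁ < 12 * m + 6 :=
  stmt_10_general p hp ℓ m H hH
end

section
/- Let ĥ be a nonnegative function on an abelian group V satisfying the parallelogram law and ĥ(n•x) = n²ĥ(x) for integers n. Let σ₁, σ₂ be ĥ-preserving automorphisms of V, let P ∈ V with ĥ(P) > 0, and let c > 2 be an integer. Then Q = σ₂(P) − σ₁(P) − c•P satisfies ĥ(Q) > 0. -/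
private lemma aux_le {V : Type*} [AddCommGroup V] (h : V → ℝ)
    (hnonneg : ∀ x, 0 ≤ h x)
    (hpar : ∀ x y, h (x - y) + h (x + y) = 2 * h x + 2 * h y)
    (Q : V) (hQ : h Q = 0) (y : V) : h y ≤ h (Q + y) := by
  set f : ℕ → ℝ := fun n => h ((n : ℤ) • Q + y) with hf
  have hrec : ∀ n : ℕ, f (n + 2) + f n = 2 * f (n + 1) := by
    intro n
    have hp := hpar (((n : ℤ) + 1) • Q + y) Q
    have h1 : ((n : ℤ) + 1) • Q + y - Q = (n : ℤ) • Q + y := by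
      rw [add_smul, one_smul]; abel
    have h2 : ((n : ℤ) + 1) • Q + y + Q = ((n : ℤ) + 2) • Q + y := by
      rw [add_smul, one_smul, add_smul]; abel
    rw [h1, h2, hQ] at hp
    simp only [hf]
    push_cast
    linarith
  have hstep : ∀ n : ℕ, f (n + 1) - f n = f 1 - f 0 := by
    intro n
    induction n with
    | zero => rfl
    | succ k ih => have := hrec k; linarith
  have hlin : ∀ n : ℕ, f n = f 0 + n * (f 1 - f 0) := by
    intro n
    induction n with
    | zero => simp
    | succ k ih => have := hstep k; push_cast; linarith
  have hd : 0 ≤ f 1 - f 0 := by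
    by_contra hd
    push_neg at hd
    obtain ⟨n, hn⟩ := exists_nat_gt (f 0 / (f 0 - f 1))
    have hfn : 0 ≤ f n := hnonneg _
    have hpos : 0 < f 0 - f 1 := by linarith
    rw [div_lt_iff₀ hpos] at hn
    have : f n < 0 := by rw [hlin n]; nlinarith
    linarith
  have h0 : f 0 = h y := by simp [hf]
  have h1 : f 1 = h (Q + y) := by simp [hf]
  linarith

theorem stmt_12 (V : Type*) [AddCommGroup V] (h : V → ℝ)
    (hnonneg : ∀ x, 0 ≤ h x)
    (hpar : ∀ x y, h (x - y) + h (x + y) = 2 * h x + 2 * h y)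
    (hhom : ∀ (n : ℤ) (x : V), h (n • x) = (n : ℝ) ^ 2 * h x)
    (σ₁ σ₂ : V ≃+ V) (hσ₁ : ∀ v, h (σ₁ v) = h v) (hσ₂ : ∀ v, h (σ₂ v) = h v)
    (P : V) (hP : 0 < h P) (c : ℤ) (hc : 2 < c) :
    0 < h (σ₂ P - σ₁ P - c • P) := by
  by_contra hQ'
  set Q := σ₂ P - σ₁ P - c • P with hQdef
  have hQ : h Q = 0 := le_antisymm (not_lt.mp hQ') (hnonneg _)
  have hQneg : h (-Q) = 0 := by
    have := hhom (-1) Q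
    simp only [neg_smul, one_smul] at this
    rw [this, hQ]; ring
  have hQeq : ∀ y, h (Q + y) = h y := by
    intro y
    refine le_antisymm ?_ (aux_le h hnonneg hpar Q hQ y)
    have := aux_le h hnonneg hpar (-Q) hQneg (Q + y)
    simpa using this
  have e1 : h (σ₂ P - σ₁ P) = (c : ℝ) ^ 2 * h P := by
    have hsplit : σ₂ P - σ₁ P = Q + c • P := by rw [hQdef]; abel
    rw [hsplit, hQeq, hhom]
  have e2 := hpar (σ₂ P) (σ₁ P)
  rw [hσ₁, hσ₂, e1] at e2
  have hc' : (3 : ℝ) ≤ (c : ℝ) := by exact_mod_cast hc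
  have := hnonneg (σ₂ P + σ₁ P)
  nlinarith [mul_le_mul_of_nonneg_right (by nlinarith : (9:ℝ) ≤ (c:ℝ)^2) hP.le]
end

section
/- Let G be an abelian group with a distinguished 'torsion' subgroup Tor(G) (the set of elements of finite order), and let ĥ : G → ℝ be nonnegative with ĥ(x) = 0 if and only if x ∈ Tor(G), satisfying the parallelogram law and ĥ(n•x) = n²ĥ(x). Let σ₁, σ₂ be ĥ-preserving automorphisms of G, P ∈ G a non-torsion element, and c > 2 an integer. Then Q = σ₂(P) − σ₁(P) − c•P is not a torsion element of G. -/
/-!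
Write `Q = w - c • P` with `w = σ₂ P - σ₁ P`. If `Q` were torsion, then `n • w = n • (c • P)` for
some `n ≥ 1`, so quadratic homogeneity gives `ĥ w = c² ĥ P`. The parallelogram law bounds
`ĥ w ≤ 2 ĥ (σ₂ P) + 2 ĥ (σ₁ P) = 4 ĥ P`, which is impossible since `ĥ P > 0` and `c > 2`.
-/

section

variable {G : Type*} [AddCommGroup G] {h : G → ℝ}

lemma apply_sub_le_of_parallelogram (hnonneg : ∀ x, 0 ≤ h x)
    (hpar : ∀ x y, h (x - y) + h (x + y) = 2 * h x + 2 * h y) (x y : G) :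
    h (x - y) ≤ 2 * h x + 2 * h y := by
  linarith [hpar x y, hnonneg (x + y)]

lemma apply_eq_of_isOfFinAddOrder_sub (hhom : ∀ (n : ℤ) (x : G), h (n • x) = (n : ℝ) ^ 2 * h x)
    {x y : G} (hxy : IsOfFinAddOrder (x - y)) : h x = h y := by
  obtain ⟨n, hn, hnxy⟩ := isOfFinAddOrder_iff_nsmul_eq_zero.1 hxy
  have hsmul : (n : ℤ) • x = (n : ℤ) • y := by
    rw [natCast_zsmul, natCast_zsmul, ← sub_eq_zero, ← nsmul_sub, hnxy]
  have hsq : ((n : ℤ) : ℝ) ^ 2 ≠ 0 := pow_ne_zero _ (by exact_mod_cast hn.ne')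
  exact mul_left_cancel₀ hsq (by rw [← hhom, ← hhom, hsmul])

end

theorem stmt_15 (G : Type*) [AddCommGroup G] (h : G → ℝ)
    (hnonneg : ∀ x, 0 ≤ h x)
    (hzero : ∀ x : G, h x = 0 ↔ IsOfFinAddOrder x)
    (hpar : ∀ x y, h (x - y) + h (x + y) = 2 * h x + 2 * h y)
    (hhom : ∀ (n : ℤ) (x : G), h (n • x) = (n : ℝ) ^ 2 * h x)
    (σ₁ σ₂ : G ≃+ G) (hσ₁ : ∀ v, h (σ₁ v) = h v) (hσ₂ : ∀ v, h (σ₂ v) = h v)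
    (P : G) (hP : ¬ IsOfFinAddOrder P) (c : ℤ) (hc : 2 < c) :
    ¬ IsOfFinAddOrder (σ₂ P - σ₁ P - c • P) := by
  intro hQ
  have hPpos : 0 < h P := (hnonneg P).lt_of_ne fun h0 => hP ((hzero P).1 h0.symm)
  have hw_eq : h (σ₂ P - σ₁ P) = (c : ℝ) ^ 2 * h P := by
    rw [apply_eq_of_isOfFinAddOrder_sub hhom hQ, hhom]
  have hw_le : h (σ₂ P - σ₁ P) ≤ 4 * h P := by
    have := apply_sub_le_of_parallelogram hnonneg hpar (σ₂ P) (σ₁ P)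
    rwa [hσ₁, hσ₂, ← two_mul, ← mul_assoc, show (2 : ℝ) * 2 = 4 by norm_num] at this
  have hc_sq : (9 : ℝ) ≤ (c : ℝ) ^ 2 := by
    have hc3 : (3 : ℝ) ≤ c := by exact_mod_cast hc
    nlinarith
  nlinarith [mul_le_mul_of_nonneg_right hc_sq hPpos.le]
end

section
/- Let q ≥ 2 be an integer and let ĥ be a nonnegative function on an abelian group V satisfying the parallelogram law, ĥ(n•x) = n²ĥ(x) for integers n, invariance under an automorphism σ, and suppose ĥ(q•(q•P) − σ(q•P)) ≥ X for some P ∈ V and real X ≥ 0. Then ĥ(P) ≥ X / (2 q² (q² + 1)). -/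
theorem stmt_17 (V : Type*) [AddCommGroup V] (h : V → ℝ)
    (hnonneg : ∀ x, 0 ≤ h x)
    (hpar : ∀ x y, h (x - y) + h (x + y) = 2 * h x + 2 * h y)
    (hhom : ∀ (n : ℤ) (x : V), h (n • x) = (n : ℝ) ^ 2 * h x)
    (σ : V ≃+ V) (hσ : ∀ v, h (σ v) = h v)
    (q : ℤ) (hq : 2 ≤ q) (P : V) (X : ℝ) (hX0 : 0 ≤ X)
    (hX : h (q • (q • P) - σ (q • P)) ≥ X) :
    h P ≥ X / (2 * (q : ℝ) ^ 2 * ((q : ℝ) ^ 2 + 1)) := by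
  have hq2 : (2 : ℝ) ≤ (q : ℝ) := by exact_mod_cast hq
  have hqpos : (0 : ℝ) < (q : ℝ) ^ 2 := by positivity
  have hpos : (0 : ℝ) < 2 * (q : ℝ) ^ 2 * ((q : ℝ) ^ 2 + 1) := by positivity
  have h1 := hpar (q • (q • P)) (σ (q • P))
  have h2 : h (q • (q • P)) = (q : ℝ) ^ 2 * ((q : ℝ) ^ 2 * h P) := by
    rw [hhom, hhom]
  have h3 : h ((σ : V ≃+ V) (q • P)) = (q : ℝ) ^ 2 * h P := by
    rw [hσ, hhom]
  have h4 := hnonneg (q • (q • P) + σ (q • P))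
  have key : X ≤ 2 * (q : ℝ) ^ 2 * ((q : ℝ) ^ 2 + 1) * h P := by nlinarith
  rw [ge_iff_le, div_le_iff₀ hpos]
  linarith
end
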